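/- Let Ω be a sphere in ℝ³ with center O and radius R > 0, let π be an affine plane with dist(O, π) < R, and let σ = Ω ∩ π (a circle on Ω). Let Γ be a sphere with center Q and radius ρ > 0 such that σ ⊆ Γ. If for some point p ∈ σ the angle between Γ and Ω at p equals the angle between Γ and the plane π at p, then the center of Γ lies on Ω, i.e. dist(O, Q) = R. -/

import Mathlib

open scoped RealInnerProductSpace

noncomputable section

abbrev Pt := EuclideanSpace ℝ (Fin 3)

/-- The angle in `[0, π/2]` between the lines directed by `u` and `v`. -/
def lineAngle (u v : Pt) : ℝ := Real.arccos (|⟪u, v⟫| / (‖u‖ * ‖v‖))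

set_option maxHeartbeats 4000000 in
/-- Let `Ω` be the sphere with center `O` and radius `R > 0`, let `π` be the plane
through `p₀` with normal vector `n ≠ 0` at distance `< R` from `O`, and let
`σ = Ω ∩ π`. If a sphere `Γ` with center `Q` and radius `ρ > 0` contains `σ`, and at
some point `p ∈ σ` the angle between `Γ` and `Ω` equals the angle between `Γ` and the
plane `π`, then the center `Q` of `Γ` lies on `Ω`. -/
theorem center_of_equal_angle_sphere_lies_on_sphere
    (O : Pt) (R : ℝ) (hR : 0 < R)
    (p₀ n : Pt) (hn : n ≠ 0)
    (hdist : Metric.infDist O {x : Pt | ⟪x - p₀, n⟫ = 0} < R)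
    (Q : Pt) (ρ : ℝ) (hρ : 0 < ρ)
    (hΓ : Metric.sphere O R ∩ {x : Pt | ⟪x - p₀, n⟫ = 0} ⊆ Metric.sphere Q ρ)
    (p : Pt) (hp : p ∈ Metric.sphere O R ∩ {x : Pt | ⟪x - p₀, n⟫ = 0})
    (hangle : lineAngle (Q - p) (O - p) = lineAngle (Q - p) n) :
    dist O Q = R := by
  have hn' : (0:ℝ) < ‖n‖ := norm_pos_iff.mpr hn
  set m : Pt := ‖n‖⁻¹ • n with hm
  have hmnorm : ‖m‖ = 1 := by
    rw [hm, norm_smul, norm_inv, norm_norm]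
    field_simp
  have hmm : ⟪m, m⟫ = (1:ℝ) := by
    rw [real_inner_self_eq_norm_sq, hmnorm]; norm_num
  have hnm : n = ‖n‖ • m := by
    rw [hm, smul_smul]; field_simp; rw [one_smul]
  -- translation between `n` and `m` plane conditions
  have hplane : ∀ x : Pt, ⟪x - p₀, n⟫ = 0 ↔ ⟪x - p₀, m⟫ = 0 := by
    intro x
    rw [hm, real_inner_smul_right]
    constructor
    · intro h; rw [h]; ring
    · intro h
      rcases mul_eq_zero.mp h with h' | h'
      · exact absurd h' (by positivity)
      · exact h'
  set d : ℝ := ⟪O - p₀, m⟫ with hd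
  -- |d| < R
  have hdR : |d| < R := by
    obtain ⟨y, hy, hyR⟩ := (Metric.infDist_lt_iff ⟨p₀, by simp⟩).mp hdist
    have hy' : ⟪y - p₀, m⟫ = 0 := (hplane y).mp hy
    have h1 : d = ⟪O - y, m⟫ := by
      have : O - p₀ = (O - y) + (y - p₀) := by abel
      rw [hd, this, inner_add_left, hy', add_zero]
    have h2 : |⟪O - y, m⟫| ≤ ‖O - y‖ * ‖m‖ := abs_real_inner_le_norm _ _
    rw [hmnorm, mul_one] at h2
    have : ‖O - y‖ = dist O y := (dist_eq_norm _ _).symm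
    rw [h1]
    calc |⟪O - y, m⟫| ≤ ‖O - y‖ := h2
      _ = dist O y := this
      _ < R := hyR
  have hd2 : d ^ 2 < R ^ 2 := by
    obtain ⟨h1, h2⟩ := abs_lt.mp hdR
    have := sq_lt_sq' h1 h2
    simpa [sq_abs] using this
  set C : Pt := O - d • m with hC
  set r : ℝ := Real.sqrt (R ^ 2 - d ^ 2) with hr
  have hr2 : r ^ 2 = R ^ 2 - d ^ 2 := Real.sq_sqrt (by linarith)
  have hrpos : 0 < r := Real.sqrt_pos.mpr (by linarith)
  -- membership lemma for points of the circle σ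
  have hmem : ∀ v : Pt, ⟪v, m⟫ = 0 → ‖v‖ = r →
      (C + v) ∈ Metric.sphere O R ∩ {x : Pt | ⟪x - p₀, n⟫ = 0} := by
    intro v hv hvr
    constructor
    · have h1 : C + v - O = v - d • m := by rw [hC]; abel
      have h2 : ‖v - d • m‖ ^ 2 = R ^ 2 := by
        rw [norm_sub_sq_real, real_inner_smul_right, hv, norm_smul, hmnorm]
        simp only [mul_zero, Real.norm_eq_abs, mul_one]
        rw [hvr]
        ring_nf
        rw [sq_abs]
        linarith [hr2]
      have h3 : ‖v - d • m‖ = R := by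
        rw [← Real.sqrt_sq (norm_nonneg (v - d • m)), h2, Real.sqrt_sq hR.le]
      simp only [Metric.mem_sphere, dist_eq_norm, h1, h3]
    · show ⟪C + v - p₀, n⟫ = 0
      rw [hplane]
      have h1 : C + v - p₀ = (O - p₀) - d • m + v := by rw [hC]; abel
      rw [h1, inner_add_left, inner_sub_left, real_inner_smul_left, hmm, hv, ← hd]
      ring
  -- facts about p
  have hpO : ‖O - p‖ = R := by
    have := hp.1
    simp only [Metric.mem_sphere] at this
    rw [← this, dist_eq_norm, norm_sub_rev]
  have hpp : ⟪p - p₀, m⟫ = 0 := (hplane p).mp hp.2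
  have hpQ : ‖Q - p‖ = ρ := by
    have := hΓ hp
    simp only [Metric.mem_sphere] at this
    rw [← this, dist_eq_norm, norm_sub_rev]
  set s : ℝ := ⟪Q - C, m⟫ with hs
  -- Q lies on the axis: Q = C + s • m
  have haxis : Q = C + s • m := by
    by_contra hne
    set Qt : Pt := Q - C - s • m with hQt
    have hQt0 : Qt ≠ 0 := by
      intro h
      apply hne
      have : Q - (C + s • m) = Qt := by rw [hQt]; abel
      have h2 : Q - (C + s • m) = 0 := by rw [this, h]
      have := sub_eq_zero.mp h2
      exact this
    have hQtpos : (0:ℝ) < ‖Qt‖ := norm_pos_iff.mpr hQt0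
    have hQtm : ⟪Qt, m⟫ = 0 := by
      rw [hQt, inner_sub_left, real_inner_smul_left, hmm, ← hs]; ring
    set w : Pt := (r / ‖Qt‖) • Qt with hw
    have hwm : ⟪w, m⟫ = 0 := by rw [hw, real_inner_smul_left, hQtm]; ring
    have hwr : ‖w‖ = r := by
      rw [hw, norm_smul, Real.norm_eq_abs, abs_div, abs_of_pos hrpos,
        abs_of_pos hQtpos]
      field_simp
    have hwm' : ⟪-w, m⟫ = 0 := by rw [inner_neg_left, hwm]; ring
    have hwr' : ‖-w‖ = r := by rw [norm_neg, hwr]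
    have h1 := hΓ (hmem w hwm hwr)
    have h2 := hΓ (hmem (-w) hwm' hwr')
    simp only [Metric.mem_sphere] at h1 h2
    have e1 : ‖C + w - Q‖ = ρ := by rw [← dist_eq_norm]; exact h1
    have e2 : ‖C + -w - Q‖ = ρ := by rw [← dist_eq_norm]; exact h2
    have f1 : C + w - Q = w - (Q - C) := by abel
    have f2 : C + -w - Q = -w - (Q - C) := by abel
    have g1 : ‖w - (Q - C)‖ ^ 2 = ‖w‖ ^ 2 - 2 * ⟪w, Q - C⟫ + ‖Q - C‖ ^ 2 :=
      norm_sub_sq_real _ _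
    have g2 : ‖-w - (Q - C)‖ ^ 2 = ‖w‖ ^ 2 + 2 * ⟪w, Q - C⟫ + ‖Q - C‖ ^ 2 := by
      rw [norm_sub_sq_real, inner_neg_left, norm_neg]; ring
    rw [f1] at e1
    rw [f2] at e2
    rw [e1] at g1
    rw [e2] at g2
    have hinner0 : ⟪w, Q - C⟫ = 0 := by linarith
    have hcontra : ⟪w, Q - C⟫ = r * ‖Qt‖ := by
      have hdecomp : Q - C = Qt + s • m := by rw [hQt]; abel
      rw [hdecomp, inner_add_right, real_inner_smul_right, hwm, hw,
        real_inner_smul_left, real_inner_self_eq_norm_sq]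
      field_simp
      ring
    rw [hcontra] at hinner0
    exact (mul_pos hrpos hQtpos).ne' hinner0
  -- now pure computation
  have hQO : Q - O = (s - d) • m := by
    rw [haxis, hC]
    rw [sub_smul]
    abel
  have hmOp : ⟪m, O - p⟫ = d := by
    rw [real_inner_comm]
    have h0 : O - p = (O - p₀) - (p - p₀) := by abel
    rw [h0, inner_sub_left, hpp, ← hd]
    ring
  have hQp : Q - p = (s - d) • m + (O - p) := by
    have : Q - p = (Q - O) + (O - p) := by abel
    rw [this, hQO]
  have hinner1 : ⟪Q - p, m⟫ = s := by
    rw [hQp, inner_add_left, real_inner_smul_left, hmm, real_inner_comm, hmOp]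
    ring
  have hinner2 : ⟪Q - p, O - p⟫ = (s - d) * d + R ^ 2 := by
    rw [hQp, inner_add_left, real_inner_smul_left, hmOp,
      real_inner_self_eq_norm_sq, hpO]
  -- the angle condition
  have hQpne : ‖Q - p‖ ≠ 0 := by rw [hpQ]; exact ne_of_gt hρ
  have key : |(s - d) * d + R ^ 2| = R * |s| := by
    have hA : |⟪Q - p, O - p⟫| / (‖Q - p‖ * ‖O - p‖) ∈ Set.Icc (-1:ℝ) 1 := by
      constructor
      · have h0 : (0:ℝ) ≤ |⟪Q - p, O - p⟫| / (‖Q - p‖ * ‖O - p‖) := by positivity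
        linarith
      · apply div_le_one_of_le₀ (abs_real_inner_le_norm _ _) (by positivity)
    have hB : |⟪Q - p, n⟫| / (‖Q - p‖ * ‖n‖) ∈ Set.Icc (-1:ℝ) 1 := by
      constructor
      · have h0 : (0:ℝ) ≤ |⟪Q - p, n⟫| / (‖Q - p‖ * ‖n‖) := by positivity
        linarith
      · apply div_le_one_of_le₀ (abs_real_inner_le_norm _ _) (by positivity)
    have heq := Real.arccos_injOn hA hB hangle
    have hBn : |⟪Q - p, n⟫| / (‖Q - p‖ * ‖n‖) = |s| / ρ := by
      rw [hnm, real_inner_smul_right, hinner1, abs_mul, abs_of_pos hn',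
        norm_smul, Real.norm_eq_abs, abs_of_pos hn', hmnorm, hpQ]
      rw [mul_one]
      field_simp
    rw [hBn] at heq
    rw [hinner2, hpQ, hpO] at heq
    have h2 := (div_eq_div_iff (by positivity) (ne_of_gt hρ)).mp heq
    -- h2 : |(s - d) * d + R ^ 2| * ρ = |s| * (ρ * R)
    have h3 : |(s - d) * d + R ^ 2| * ρ = (R * |s|) * ρ := by linear_combination h2
    exact mul_right_cancel₀ (ne_of_gt hρ) h3
  -- finish with algebra
  have hsq : ((s - d) * d + R ^ 2) ^ 2 = R ^ 2 * s ^ 2 := by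
    have := congrArg (· ^ 2) key
    simpa [mul_pow, sq_abs] using this
  have hfac : (R ^ 2 - d ^ 2) * (R ^ 2 - (s - d) ^ 2) = 0 := by linear_combination hsq
  have ht2 : (s - d) ^ 2 = R ^ 2 := by
    rcases mul_eq_zero.mp hfac with h | h
    · linarith
    · linarith
  have : dist O Q = |s - d| := by
    rw [dist_eq_norm]
    have : O - Q = -((s - d) • m) := by rw [← hQO]; abel
    rw [this, norm_neg, norm_smul, Real.norm_eq_abs, hmnorm, mul_one]
  rw [this, ← Real.sqrt_sq (abs_nonneg (s - d)), sq_abs, ht2, Real.sqrt_sq hR.le]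

end
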